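/- There exists a constant d (depending only on the universal machine) such that for every n and every randomized protocol {Π_r}_{r ∈ S} computing f(x,y) = x ⊕ y (bitwise XOR) on {0,1}^n × {0,1}^n with probability at least 2/3, there is a seed r₀ ∈ S such that for more than half of all pairs (x,y) ∈ {0,1}^n × {0,1}^n, C(t_{r₀}(x,y) ∣ Π_{r₀}) ≥ 2n − d; consequently log₂(max_{r ∈ S} |𝓡_r|) ≥ 2n − d. -/

import Mathlib

/-- A machine maps a program and a condition string to at most one output string. -/
abbrev Machine := List Bool → List Bool →. List Bool

/-- Conditional Kolmogorov complexity relative to machine `U`. -/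
noncomputable def KC (U : Machine) (x u : List Bool) : ℕ :=
  sInf { k | ∃ p : List Bool, p.length = k ∧ x ∈ U p u }

/-- `U` is a universal machine. -/
def IsUniversal (U : Machine) : Prop :=
  Partrec₂ U ∧
    ∀ V : Machine, Partrec₂ V →
      ∃ c : ℕ, ∀ p u x, x ∈ V p u → ∃ q : List Bool, x ∈ U q u ∧ q.length ≤ p.length + c

/-- Self-delimiting encoding of a string. -/
def eBits (x : List Bool) : List Bool := (x.map fun b => [b, b]).flatten ++ [true, false]

/-- The fixed computable pairing of strings. -/
def ePair (x y : List Bool) : List Bool := eBits x ++ y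

/-- Encoding of a list of strings. -/
def eList (l : List (List Bool)) : List Bool := (l.map eBits).flatten

/-- Conditional mutual information `I(x : y ∣ u)`. -/
noncomputable def MI (U : Machine) (x y u : List Bool) : ℝ :=
  (KC U x u : ℝ) + KC U y u - KC U (ePair x y) u

/-- Conditional triple information `I(x : y : w ∣ u)`. -/
noncomputable def TI (U : Machine) (x y w u : List Bool) : ℝ :=
  (KC U x u : ℝ) + KC U y u + KC U w u - KC U (ePair x y) u - KC U (ePair x w) u
    - KC U (ePair y w) u + KC U (ePair x (ePair y w)) u

/-- A combinatorial rectangle, given by its list of rows and list of columns. -/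
structure Rect where
  rows : List (List Bool)
  cols : List (List Bool)
deriving DecidableEq

/-- Canonical encoding of a rectangle. -/
def encRect (R : Rect) : List Bool := ePair (eList R.rows) (eList R.cols)

/-- The list of all bit strings of length `n`. -/
def allBV : ℕ → List (List Bool)
  | 0 => [[]]
  | n + 1 => (allBV n).flatMap fun x => [false :: x, true :: x]

/-- A nondeterministic communication protocol over `{0,1}^{n₁} × {0,1}^{n₂}`:
a finite family of rectangles covering the domain together with a transcript
function selecting, for every cell of the domain, a rectangle containing it. -/
structure Protocol (n₁ n₂ : ℕ) where
  rects : List Rect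
  trans : List Bool → List Bool → Rect
  rows_len : ∀ R ∈ rects, ∀ s ∈ R.rows, s.length = n₁
  cols_len : ∀ R ∈ rects, ∀ s ∈ R.cols, s.length = n₂
  trans_mem : ∀ x y : List Bool, x.length = n₁ → y.length = n₂ → trans x y ∈ rects
  trans_row : ∀ x y : List Bool, x.length = n₁ → y.length = n₂ → x ∈ (trans x y).rows
  trans_col : ∀ x y : List Bool, x.length = n₁ → y.length = n₂ → y ∈ (trans x y).cols

/-- The thickness of a cell: the number of rectangles of the protocol containing it. -/
def cellThick {n₁ n₂ : ℕ} (P : Protocol n₁ n₂) (x y : List Bool) : ℕ :=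
  P.rects.countP fun R => decide (x ∈ R.rows ∧ y ∈ R.cols)

/-- The thickness of a rectangle: the maximal thickness of a cell of the rectangle. -/
def rectThick {n₁ n₂ : ℕ} (P : Protocol n₁ n₂) (R : Rect) : ℕ :=
  (R.rows.flatMap fun x => R.cols.map fun y => cellThick P x y).foldr max 0

/-- Canonical encoding of a protocol: the list of its rectangles followed by
the graph of the transcript function on the domain. -/
def encProt {n₁ n₂ : ℕ} (P : Protocol n₁ n₂) : List Bool :=
  ePair (eList (P.rects.map encRect))
    (eList ((allBV n₁).flatMap fun x => (allBV n₂).map fun y => encRect (P.trans x y)))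

/-- A protocol with error: a protocol together with output functions of Alice and Bob. -/
structure EProtocol (n₁ n₂ : ℕ) extends Protocol n₁ n₂ where
  gA : List Bool → Rect → List Bool
  gB : List Bool → Rect → List Bool

/-- Canonical encoding of a protocol with error. -/
def encEProt {n₁ n₂ : ℕ} (P : EProtocol n₁ n₂) : List Bool :=
  ePair (encProt P.toProtocol)
    (ePair (eList ((allBV n₁).flatMap fun x => P.rects.map fun R => P.gA x R))
           (eList ((allBV n₂).flatMap fun y => P.rects.map fun R => P.gB y R)))

/-- Bitwise XOR of two bit strings. -/
def xorStr (x y : List Bool) : List Bool := List.zipWith xor x y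

/-!
Averaging over the seeds gives one protocol `Π = Π_{r₀}` that is correct on at least `2/3` of the
`4ⁿ` input pairs. If `(x, y)` and `(x, y')` are correct pairs in the same rectangle `R`, Alice
outputs the same string `x ⊕ y = x ⊕ y'`, so `y = y'`; symmetrically for Bob. Hence the correct
pairs of `R` form a partial matching between its rows and columns, and there are at most
`√|R|` of them. As the rectangles of `Π` are disjoint, Cauchy–Schwarz shows that any set `S` of
correct pairs meets at least `|S|² / 4ⁿ` rectangles. With `S` all correct pairs this gives
`|𝓡| ≥ (4/9) 4ⁿ`. With `S` the correct pairs whose rectangle has complexity below `2n - 6`,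
there are fewer than `4ⁿ / 64` such rectangles, so `|S| ≤ 4ⁿ / 8`; the remaining pairs,
more than `(2/3 - 1/8) 4ⁿ > 4ⁿ / 2`, have a rectangle of complexity at least `2n - 6`.
-/

open Finset

lemma mem_allBV {n : ℕ} {x : List Bool} : x ∈ allBV n ↔ x.length = n := by
  induction n generalizing x with
  | zero => simp [allBV, List.length_eq_zero_iff]
  | succ n ih =>
    cases x with
    | nil => simp [allBV]
    | cons b x => cases b <;> simp [allBV, ih]

lemma nodup_allBV (n : ℕ) : (allBV n).Nodup := by
  induction n with
  | zero => simp [allBV]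
  | succ n ih =>
    refine List.nodup_flatMap.mpr ⟨fun x _ => by simp, ih.imp fun hxy => ?_⟩
    simp [Function.onFun, List.disjoint_left, hxy]

lemma length_allBV (n : ℕ) : (allBV n).length = 2 ^ n := by
  induction n with
  | zero => simp [allBV]
  | succ n ih => simp [allBV, List.length_flatMap, ih, pow_succ]

def cube (n : ℕ) : Finset (List Bool) := (allBV n).toFinset

@[simp]
lemma mem_cube {n : ℕ} {x : List Bool} : x ∈ cube n ↔ x.length = n := by
  simp [cube, mem_allBV]

lemma card_cube (n : ℕ) : #(cube n) = 2 ^ n := by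
  rw [cube, List.toFinset_card_of_nodup (nodup_allBV n), length_allBV]

lemma card_cube_product (n₁ n₂ : ℕ) : #(cube n₁ ×ˢ cube n₂) = 2 ^ (n₁ + n₂) := by
  rw [card_product, card_cube, card_cube, pow_add]

lemma eBits_append_inj {x y u v : List Bool} (h : eBits x ++ u = eBits y ++ v) :
    x = y ∧ u = v := by
  induction x generalizing y with
  | nil => cases y with
    | nil => simpa [eBits] using h
    | cons c y => cases c <;> simp [eBits] at h
  | cons b x ih => cases y with
    | nil => cases b <;> simp [eBits] at h
    | cons c y =>
      simp only [eBits, List.map_cons, List.flatten_cons, List.cons_append, List.nil_append,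
        List.append_assoc, List.cons.injEq] at h
      obtain ⟨rfl, -, h⟩ := h
      obtain ⟨rfl, rfl⟩ := ih (by simpa [eBits] using h)
      exact ⟨rfl, rfl⟩

lemma eList_injective : Function.Injective eList := by
  intro l l' h
  induction l generalizing l' with
  | nil => cases l' with
    | nil => rfl
    | cons a l' => simp [eList, eBits] at h
  | cons a l ih => cases l' with
    | nil => simp [eList, eBits] at h
    | cons a' l' =>
      obtain ⟨rfl, hl⟩ := eBits_append_inj (u := eList l) (v := eList l') h
      rw [ih hl]

lemma ePair_inj {x y x' y' : List Bool} (h : ePair x y = ePair x' y') : x = x' ∧ y = y' :=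
  eBits_append_inj h

lemma encRect_injective : Function.Injective encRect := by
  rintro ⟨rows, cols⟩ ⟨rows', cols'⟩ h
  obtain ⟨h₁, h₂⟩ := ePair_inj h
  exact Rect.mk.injEq .. ▸ ⟨eList_injective h₁, eList_injective h₂⟩

lemma xorStr_comm (x y : List Bool) : xorStr x y = xorStr y x :=
  List.zipWith_comm_of_comm fun a b => Bool.xor_comm a b

lemma xorStr_left_cancel {x y y' : List Bool} (hy : y.length = x.length)
    (hy' : y'.length = x.length) (h : xorStr x y = xorStr x y') : y = y' := by
  induction x generalizing y y' with
  | nil => rw [List.length_eq_zero_iff.mp hy, List.length_eq_zero_iff.mp hy']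
  | cons b x ih =>
    obtain _ | ⟨c, y⟩ := y; · simp at hy
    obtain _ | ⟨c', y'⟩ := y'; · simp at hy'
    simp only [xorStr, List.zipWith_cons_cons, List.cons.injEq, Bool.xor_right_inj] at h
    exact congrArg₂ _ h.1 (ih (by simpa using hy) (by simpa using hy') h.2)

section Kolmogorov

variable {U : Machine}

lemma IsUniversal.exists_mem (hU : IsUniversal U) (x u : List Bool) : ∃ p, x ∈ U p u := by
  obtain ⟨c, hc⟩ := hU.2 (fun p _ => Part.some p) Computable.fst
  obtain ⟨q, hq, -⟩ := hc x u x (Part.mem_some x)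
  exact ⟨q, hq⟩

lemma IsUniversal.exists_length_eq_KC (hU : IsUniversal U) (x u : List Bool) :
    ∃ p : List Bool, p.length = KC U x u ∧ x ∈ U p u :=
  Nat.sInf_mem (s := {k | ∃ p : List Bool, p.length = k ∧ x ∈ U p u})
    (have ⟨p, hp⟩ := hU.exists_mem x u; ⟨p.length, p, rfl, hp⟩)

/-- Distinct strings have distinct shortest programs, and there are `2ᵏ - 1` programs of length
below `k`. -/
lemma card_lt_two_pow_of_KC_lt (hU : IsUniversal U) {u : List Bool} {F : Finset (List Bool)}
    {k : ℕ} (hF : ∀ x ∈ F, KC U x u < k) : #F < 2 ^ k := by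
  choose p hp_length hp_mem using fun x => hU.exists_length_eq_KC x u
  calc #F ≤ #((range k).biUnion cube) :=
        card_le_card_of_injOn p (fun x hx => by simp [hp_length, hF x hx])
          fun x _ y _ hxy => Part.mem_unique (hp_mem x) (hxy ▸ hp_mem y)
    _ ≤ ∑ i ∈ range k, #(cube i) := card_biUnion_le
    _ = ∑ i ∈ range k, 2 ^ i := by simp only [card_cube]
    _ < 2 ^ k := Nat.geomSum_lt le_rfl fun i hi => mem_range.mp hi

lemma two_pow_mul_card_le_of_KC_add_lt (hU : IsUniversal U) {u : List Bool}
    {F : Finset (List Bool)} {c k : ℕ} (hF : ∀ x ∈ F, KC U x u + c < k) : 2 ^ c * #F ≤ 2 ^ k := by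
  obtain rfl | ⟨x, hx⟩ := F.eq_empty_or_nonempty
  · simp
  have hck : c ≤ k := by have := hF x hx; omega
  calc 2 ^ c * #F ≤ 2 ^ c * 2 ^ (k - c) :=
        Nat.mul_le_mul_left _ (card_lt_two_pow_of_KC_lt hU (u := u) fun y hy => by
          have := hF y hy; omega).le
    _ = 2 ^ k := by rw [← pow_add, Nat.add_sub_cancel' hck]

end Kolmogorov

lemma exists_mul_card_le_card_filter {α ι : Type*} [Fintype ι] [Nonempty ι] (s : Finset α)
    (P : ι → α → Prop) [∀ i a, Decidable (P i a)] (c : ℝ)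
    (h : ∀ a ∈ s, c * Fintype.card ι ≤ #{i | P i a}) :
    ∃ i, c * #s ≤ #{a ∈ s | P i a} := by
  have hsum : ∑ _i : ι, c * #s ≤ ∑ i, (#{a ∈ s | P i a} : ℝ) :=
    calc ∑ _i : ι, c * #s = ∑ _a ∈ s, c * Fintype.card ι := by
          simp only [sum_const, card_univ, nsmul_eq_mul]; ring
      _ ≤ ∑ a ∈ s, (#{i | P i a} : ℝ) := sum_le_sum h
      _ = ∑ i, (#{a ∈ s | P i a} : ℝ) := by simp only [card_filter]; push_cast; exact sum_comm
  obtain ⟨i, -, hi⟩ := exists_le_of_sum_le univ_nonempty hsum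
  exact ⟨i, hi⟩

lemma sq_card_le_of_injOn_fst_of_injOn_snd {α β : Type*} {M : Finset (α × β)} {A : Finset α}
    {B : Finset β} (hM : M ⊆ A ×ˢ B) (h₁ : Set.InjOn Prod.fst (M : Set (α × β)))
    (h₂ : Set.InjOn Prod.snd (M : Set (α × β))) :
    #M ^ 2 ≤ #(A ×ˢ B) :=
  card_product A B ▸ sq #M ▸ Nat.mul_le_mul
    (card_le_card_of_injOn _ (fun _ hp => (mem_product.mp (hM hp)).1) h₁)
    (card_le_card_of_injOn _ (fun _ hp => (mem_product.mp (hM hp)).2) h₂)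

namespace Rect

def cells (R : Rect) : Finset (List Bool × List Bool) := R.rows.toFinset ×ˢ R.cols.toFinset

def CellDisjoint (R₁ R₂ : Rect) : Prop :=
  ∀ x y : List Bool, ¬(x ∈ R₁.rows ∧ y ∈ R₁.cols ∧ x ∈ R₂.rows ∧ y ∈ R₂.cols)

instance : Std.Symm CellDisjoint :=
  ⟨fun _ _ h x y hxy => h x y ⟨hxy.2.2.1, hxy.2.2.2, hxy.1, hxy.2.1⟩⟩

lemma CellDisjoint.disjoint_cells {R₁ R₂ : Rect} (h : R₁.CellDisjoint R₂) :
    Disjoint R₁.cells R₂.cells := by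
  rw [disjoint_left]
  rintro ⟨x, y⟩ h₁ h₂
  simp only [cells, mem_product, List.mem_toFinset] at h₁ h₂
  exact h x y ⟨h₁.1, h₁.2, h₂.1, h₂.2⟩

end Rect

lemma Protocol.cells_subset {n₁ n₂ : ℕ} (P : Protocol n₁ n₂) {R : Rect} (hR : R ∈ P.rects) :
    R.cells ⊆ cube n₁ ×ˢ cube n₂ := by
  rintro ⟨x, y⟩ h
  simp only [Rect.cells, mem_product, List.mem_toFinset] at h
  simpa using ⟨P.rows_len R hR x h.1, P.cols_len R hR y h.2⟩

lemma Protocol.sum_card_cells_le {n₁ n₂ : ℕ} (P : Protocol n₁ n₂)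
    (hP : P.rects.Pairwise Rect.CellDisjoint) {T : Finset Rect} (hT : ∀ R ∈ T, R ∈ P.rects) :
    ∑ R ∈ T, #R.cells ≤ 2 ^ (n₁ + n₂) := by
  have hdisj : (T : Set Rect).PairwiseDisjoint Rect.cells := fun R₁ h₁ R₂ h₂ hne =>
    (hP.forall (hT R₁ h₁) (hT R₂ h₂) hne).disjoint_cells
  rw [← card_biUnion hdisj, ← card_cube_product]
  exact card_le_card (biUnion_subset.mpr fun R hR => P.cells_subset (hT R hR))

namespace EProtocol

variable {n : ℕ} (P : EProtocol n n)

def correctPairs : Finset (List Bool × List Bool) :=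
  {p ∈ cube n ×ˢ cube n | P.gA p.1 (P.trans p.1 p.2) = xorStr p.1 p.2 ∧
    P.gB p.2 (P.trans p.1 p.2) = xorStr p.1 p.2}

lemma mem_correctPairs {p : List Bool × List Bool} :
    p ∈ P.correctPairs ↔ p.1.length = n ∧ p.2.length = n ∧
      P.gA p.1 (P.trans p.1 p.2) = xorStr p.1 p.2 ∧
      P.gB p.2 (P.trans p.1 p.2) = xorStr p.1 p.2 := by
  simp [correctPairs, and_assoc]

lemma sq_card_filter_trans_eq_le {S : Finset (List Bool × List Bool)} (hS : S ⊆ P.correctPairs)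
    (R : Rect) : #{p ∈ S | P.trans p.1 p.2 = R} ^ 2 ≤ #R.cells := by
  have hcorrect : ∀ {x y}, (x, y) ∈ {p ∈ S | P.trans p.1 p.2 = R} → x.length = n ∧
      y.length = n ∧ P.gA x R = xorStr x y ∧ P.gB y R = xorStr x y := fun hp => by
    obtain ⟨hpS, rfl⟩ := mem_filter.mp hp
    exact (P.mem_correctPairs).mp (hS hpS)
  refine sq_card_le_of_injOn_fst_of_injOn_snd ?_ ?_ ?_
  · rintro ⟨x, y⟩ hp
    obtain ⟨hx, hy, -⟩ := hcorrect hp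
    obtain rfl := (mem_filter.mp hp).2
    simpa [Rect.cells] using ⟨P.trans_row _ _ hx hy, P.trans_col _ _ hx hy⟩
  · rintro ⟨x, y⟩ hp ⟨x', y'⟩ hq (rfl : x = x')
    obtain ⟨hx, hy, hA, -⟩ := hcorrect hp
    obtain ⟨-, hy', hA', -⟩ := hcorrect hq
    exact congrArg (Prod.mk x)
      (xorStr_left_cancel (hy.trans hx.symm) (hy'.trans hx.symm) (hA.symm.trans hA'))
  · rintro ⟨x, y⟩ hp ⟨x', y'⟩ hq (rfl : y = y')
    obtain ⟨hx, hy, -, hB⟩ := hcorrect hp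
    obtain ⟨hx', -, -, hB'⟩ := hcorrect hq
    rw [xorStr_comm] at hB hB'
    exact congrArg (·, y)
      (xorStr_left_cancel (hx.trans hy.symm) (hx'.trans hy.symm) (hB.symm.trans hB'))

lemma sq_card_le_card_image_trans_mul (hP : P.rects.Pairwise Rect.CellDisjoint)
    {S : Finset (List Bool × List Bool)} (hS : S ⊆ P.correctPairs) :
    #S ^ 2 ≤ #(S.image fun p => P.trans p.1 p.2) * 2 ^ (2 * n) := by
  set tr := fun p : List Bool × List Bool => P.trans p.1 p.2
  have himage : ∀ R ∈ S.image tr, R ∈ P.rects := by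
    simp only [mem_image]
    rintro _ ⟨p, hp, rfl⟩
    obtain ⟨h₁, h₂, -⟩ := (P.mem_correctPairs).mp (hS hp)
    exact P.trans_mem _ _ h₁ h₂
  calc #S ^ 2 = (∑ R ∈ S.image tr, #{p ∈ S | tr p = R}) ^ 2 := by rw [← card_eq_sum_card_image]
    _ ≤ #(S.image tr) * ∑ R ∈ S.image tr, #{p ∈ S | tr p = R} ^ 2 := sq_sum_le_card_mul_sum_sq
    _ ≤ #(S.image tr) * ∑ R ∈ S.image tr, #R.cells := by
        gcongr with R; exact P.sq_card_filter_trans_eq_le hS R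
    _ ≤ #(S.image tr) * 2 ^ (2 * n) := by
        gcongr; rw [two_mul]; exact P.sum_card_cells_le hP himage

lemma two_pow_le_three_mul_length_rects (hP : P.rects.Pairwise Rect.CellDisjoint)
    (hcorrect : 2 * 2 ^ (2 * n) ≤ 3 * #P.correctPairs) : 2 ^ (2 * n) ≤ 3 * P.rects.length := by
  have hsq := P.sq_card_le_card_image_trans_mul hP subset_rfl
  have himage : #(P.correctPairs.image fun p => P.trans p.1 p.2) ≤ P.rects.length := by
    refine (card_le_card fun R hR => ?_).trans (List.toFinset_card_le _)
    obtain ⟨p, hp, rfl⟩ := mem_image.mp hR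
    obtain ⟨h₁, h₂, -⟩ := (P.mem_correctPairs).mp hp
    exact List.mem_toFinset.mpr (P.trans_mem _ _ h₁ h₂)
  have hpos : 0 < 2 ^ (2 * n) := by positivity
  nlinarith

lemma two_pow_mul_card_le_of_KC_trans_add_lt {U : Machine} (hU : IsUniversal U)
    (hP : P.rects.Pairwise Rect.CellDisjoint) {S : Finset (List Bool × List Bool)}
    (hS : S ⊆ P.correctPairs) {u : List Bool} {e : ℕ}
    (hlow : ∀ p ∈ S, KC U (encRect (P.trans p.1 p.2)) u + 2 * e < 2 * n) :
    2 ^ e * #S ≤ 2 ^ (2 * n) := by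
  set T := S.image fun p => P.trans p.1 p.2
  have hT : 2 ^ (2 * e) * #T ≤ 2 ^ (2 * n) := by
    rw [← card_image_of_injective T encRect_injective]
    refine two_pow_mul_card_le_of_KC_add_lt hU (u := u) fun x hx => ?_
    obtain ⟨_, hR, rfl⟩ := mem_image.mp hx
    obtain ⟨p, hp, rfl⟩ := mem_image.mp hR
    exact hlow p hp
  have hsq := P.sq_card_le_card_image_trans_mul hP hS
  refine (Nat.pow_le_pow_iff_left two_ne_zero).mp ?_
  calc (2 ^ e * #S) ^ 2 = 2 ^ (2 * e) * #S ^ 2 := by ring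
    _ ≤ 2 ^ (2 * e) * (#T * 2 ^ (2 * n)) := Nat.mul_le_mul_left _ hsq
    _ ≤ 2 ^ (2 * n) * 2 ^ (2 * n) := by rw [← mul_assoc]; exact Nat.mul_le_mul_right _ hT
    _ = (2 ^ (2 * n)) ^ 2 := (sq _).symm

lemma two_pow_lt_two_mul_card_KC_trans_ge {U : Machine} (hU : IsUniversal U)
    (hP : P.rects.Pairwise Rect.CellDisjoint) (u : List Bool)
    (hcorrect : 2 * 2 ^ (2 * n) ≤ 3 * #P.correctPairs) :
    2 ^ (2 * n) < 2 * #{p ∈ cube n ×ˢ cube n | 2 * n ≤ KC U (encRect (P.trans p.1 p.2)) u + 6} := by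
  have hlow : 2 ^ 3 * #{p ∈ P.correctPairs | KC U (encRect (P.trans p.1 p.2)) u + 2 * 3 < 2 * n}
      ≤ 2 ^ (2 * n) :=
    P.two_pow_mul_card_le_of_KC_trans_add_lt hU hP (filter_subset _ _) fun p hp =>
      (mem_filter.mp hp).2
  have hhigh : #{p ∈ P.correctPairs | ¬KC U (encRect (P.trans p.1 p.2)) u + 2 * 3 < 2 * n}
      ≤ #{p ∈ cube n ×ˢ cube n | 2 * n ≤ KC U (encRect (P.trans p.1 p.2)) u + 6} := by
    refine card_le_card fun p hp => ?_
    obtain ⟨hp, hhigh⟩ := mem_filter.mp hp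
    exact mem_filter.mpr ⟨filter_subset _ _ hp, by omega⟩
  have hsplit := card_filter_add_card_filter_not (s := P.correctPairs)
    fun p => KC U (encRect (P.trans p.1 p.2)) u + 2 * 3 < 2 * n
  have hpos : 0 < 2 ^ (2 * n) := by positivity
  omega

end EProtocol

lemma sub_le_logb_of_two_pow_le {k c : ℕ} {x : ℝ} (h : (2 : ℝ) ^ k ≤ 2 ^ c * x) :
    (k : ℝ) - c ≤ Real.logb 2 x := by
  have hx : 0 < x := pos_of_mul_pos_right ((by positivity : (0 : ℝ) < 2 ^ k).trans_le h)
    (by positivity)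
  have := Real.logb_le_logb_of_le (b := 2) (by norm_num) (by positivity) h
  rw [Real.logb_mul (by positivity) hx.ne', Real.logb_pow, Real.logb_pow,
    Real.logb_self_eq_one (by norm_num)] at this
  linarith

lemma natCard_subtype_length_eq_length_eq {n₁ n₂ : ℕ} (Q : List Bool × List Bool → Prop)
    [DecidablePred Q] :
    Nat.card {p : List Bool × List Bool // p.1.length = n₁ ∧ p.2.length = n₂ ∧ Q p} =
      #{p ∈ cube n₁ ×ˢ cube n₂ | Q p} := by
  rw [← Nat.card_eq_finsetCard]
  exact Nat.card_congr (Equiv.subtypeEquivRight fun p => by simp [and_assoc])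

/-- For any randomized protocol (a distribution over thickness-1 protocols) computing
bitwise XOR with probability at least `2/3`, there is a seed `r₀` such that for more
than half of all input pairs `C(t_{r₀}(x,y) ∣ Π_{r₀}) ≥ 2n - d`; consequently the
communication cost is at least `2n - d`. -/
theorem stmt12 (U : Machine) (hU : IsUniversal U) :
    ∃ d : ℝ, ∀ n m : ℕ, 0 < m → ∀ Pr : Fin m → EProtocol n n,
      (∀ r : Fin m, ((Pr r).rects).Pairwise fun R₁ R₂ =>
        ∀ x y : List Bool, ¬(x ∈ R₁.rows ∧ y ∈ R₁.cols ∧ x ∈ R₂.rows ∧ y ∈ R₂.cols)) →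
      (∀ x y : List Bool, x.length = n → y.length = n →
        ((Finset.univ.filter fun r : Fin m =>
            (Pr r).gA x ((Pr r).trans x y) = xorStr x y ∧
            (Pr r).gB y ((Pr r).trans x y) = xorStr x y).card : ℝ) ≥ (2 / 3) * m) →
      ∃ r₀ : Fin m,
        (2 * (Nat.card {p : List Bool × List Bool // p.1.length = n ∧ p.2.length = n ∧
            (KC U (encRect ((Pr r₀).trans p.1 p.2)) (encEProt (Pr r₀)) : ℝ) ≥ 2 * n - d} : ℝ)
          > 2 ^ (2 * n)) ∧
        Real.logb 2 ((Finset.univ.sup fun r : Fin m => (Pr r).rects.length : ℕ) : ℝ) ≥ 2 * n - d := by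
  refine ⟨6, fun n m hm Pr hdisj hcorr => ?_⟩
  have : Nonempty (Fin m) := ⟨⟨0, hm⟩⟩
  obtain ⟨r₀, hr₀⟩ := exists_mul_card_le_card_filter (cube n ×ˢ cube n)
    (fun r p => (Pr r).gA p.1 ((Pr r).trans p.1 p.2) = xorStr p.1 p.2 ∧
      (Pr r).gB p.2 ((Pr r).trans p.1 p.2) = xorStr p.1 p.2) (2 / 3) fun p hp => by
    obtain ⟨h₁, h₂⟩ := mem_product.mp hp
    simpa using hcorr p.1 p.2 (mem_cube.mp h₁) (mem_cube.mp h₂)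
  refine ⟨r₀, ?_⟩
  set P := Pr r₀
  have hcorrect : 2 * 2 ^ (2 * n) ≤ 3 * #P.correctPairs := by
    change 2 / 3 * ((#(cube n ×ˢ cube n) : ℕ) : ℝ) ≤ #P.correctPairs at hr₀
    rw [card_cube_product, ← two_mul] at hr₀
    push_cast at hr₀
    exact_mod_cast (by linarith : (2 * 2 ^ (2 * n) : ℝ) ≤ 3 * #P.correctPairs)
  refine ⟨?_, ?_⟩
  · have hiff : ∀ p : List Bool × List Bool,
        (KC U (encRect (P.trans p.1 p.2)) (encEProt P) : ℝ) ≥ 2 * n - 6 ↔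
          2 * n ≤ KC U (encRect (P.trans p.1 p.2)) (encEProt P) + 6 := fun p => by
      rw [ge_iff_le, sub_le_iff_le_add]; exact_mod_cast Iff.rfl
    simp_rw [hiff, natCard_subtype_length_eq_length_eq]
    exact_mod_cast P.two_pow_lt_two_mul_card_KC_trans_ge hU (hdisj r₀) (encEProt P) hcorrect
  · have hlength := P.two_pow_le_three_mul_length_rects (hdisj r₀) hcorrect
    have hsup : P.rects.length ≤ univ.sup fun r => (Pr r).rects.length :=
      le_sup (f := fun r => (Pr r).rects.length) (mem_univ r₀)
    have hlogb := sub_le_logb_of_two_pow_le (k := 2 * n) (c := 6)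
      (x := (univ.sup fun r => (Pr r).rects.length : ℕ)) (by exact_mod_cast (by omega :
        2 ^ (2 * n) ≤ 2 ^ 6 * univ.sup fun r => (Pr r).rects.length))
    exact_mod_cast hlogb
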